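/- Let f, g ∈ ℂ⟦x,y⟧ be such that the intersection number ν := dim_ℂ ℂ⟦x,y⟧/(f, g) is finite. Then for every n ≥ 1, dim_ℂ ℂ⟦x,y⟧/(f(x^n, y^n), g(x^n, y^n)) = n²·ν. (This computes the intersection multiplicity at a preimage of a vertex of the Kummer transforms of two local branches: if δ_i and δ_j are distinct local branches of a curve at a vertex, their pullbacks satisfy (δ̃_i · δ̃_j)_Q = n² (δ_i · δ_j)_P.) -/

import Mathlib

/-!
Over a commutative ring `K`, `K⟦X_σ⟧` is a free module over its subring `expand n K⟦X_σ⟧` of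
series in the `X_i ^ n`, with basis the monomials `X ^ ρ`, `0 ≤ ρ i < n`; the coordinate `φ_ρ`
of `φ` has coefficients `φ_ρ(m) = φ(n • m + ρ)`. Because `expand n` is a ring homomorphism, the
coordinates of `φ * expand n h` are the `φ_ρ * h`, so `φ` lies in the extended ideal
`I.map (expand n)` iff all its coordinates lie in `I`. Hence
`K⟦X_σ⟧ ⧸ I.map (expand n) ≅ (K⟦X_σ⟧ ⧸ I) ^ (n ^ card σ)` as `K`-modules, and
`(f(xⁿ, yⁿ), g(xⁿ, yⁿ)) = (f, g).map (expand n)`.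
-/

noncomputable section

/-- Formal partial derivative `∂f/∂(x_i)` of a two-variable formal power series. -/
def pderiv2 (i : Fin 2) (f : MvPowerSeries (Fin 2) ℂ) : MvPowerSeries (Fin 2) ℂ :=
  fun e => ((e i : ℂ) + 1) * MvPowerSeries.coeff (R := ℂ) (e + Finsupp.single i 1) f

/-- Substitution `x ↦ xⁿ` in a two-variable formal power series `f(x,y)`:
the coefficient of `x^a y^b` in `f(xⁿ, y)` is the coefficient of `x^(a/n) y^b` of `f`
when `n ∣ a`, and `0` otherwise. -/
def substX (n : ℕ) (f : MvPowerSeries (Fin 2) ℂ) : MvPowerSeries (Fin 2) ℂ :=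
  fun e => if n ∣ e 0
    then MvPowerSeries.coeff (R := ℂ) (Finsupp.single 0 (e 0 / n) + Finsupp.single 1 (e 1)) f
    else 0

/-- Substitution `x ↦ xⁿ`, `y ↦ yⁿ` in a two-variable formal power series `f(x,y)`. -/
def substXY (n : ℕ) (f : MvPowerSeries (Fin 2) ℂ) : MvPowerSeries (Fin 2) ℂ :=
  fun e => if n ∣ e 0 ∧ n ∣ e 1
    then MvPowerSeries.coeff (R := ℂ) (Finsupp.single 0 (e 0 / n) + Finsupp.single 1 (e 1 / n)) f
    else 0

/-- The one-variable power series `f(0, y)`. -/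
def restY (f : MvPowerSeries (Fin 2) ℂ) : PowerSeries ℂ :=
  PowerSeries.mk fun b => MvPowerSeries.coeff (R := ℂ) (Finsupp.single 1 b) f

/-- The one-variable power series `f(x, 0)`. -/
def restX (f : MvPowerSeries (Fin 2) ℂ) : PowerSeries ℂ :=
  PowerSeries.mk fun a => MvPowerSeries.coeff (R := ℂ) (Finsupp.single 0 a) f

namespace MvPowerSeries

variable {σ K : Type*} [CommRing K] {n : ℕ}

section
variable [Finite σ]

def residueExponent (ρ : σ → Fin n) : σ →₀ ℕ :=
  Finsupp.equivFunOnFinite.symm fun i => ρ i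

@[simp]
lemma residueExponent_apply (ρ : σ → Fin n) (i : σ) : residueExponent ρ i = ρ i := rfl

lemma residueExponent_lt (ρ : σ → Fin n) (i : σ) : residueExponent ρ i < n := (ρ i).is_lt

lemma residueExponent_injective : Function.Injective (residueExponent (σ := σ) (n := n)) :=
  fun _ _ h => funext fun i => Fin.ext (DFunLike.congr_fun h i)

lemma nsmul_floorDiv_add_residueExponent (hn : n ≠ 0) (e : σ →₀ ℕ) :
    n • (e ⌊/⌋ n) + residueExponent (fun i => ⟨e i % n, Nat.mod_lt _ (Nat.pos_of_ne_zero hn)⟩) =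
      e := by
  ext i
  simp [Nat.div_add_mod]

end

variable (n) in
def expandComponent (ρ : σ →₀ ℕ) : MvPowerSeries σ K →ₗ[K] MvPowerSeries σ K where
  toFun φ m := coeff (n • m + ρ) φ
  map_add' _ _ := rfl
  map_smul' _ _ := rfl

@[simp]
lemma coeff_expandComponent (ρ m : σ →₀ ℕ) (φ : MvPowerSeries σ K) :
    coeff m (expandComponent n ρ φ) = coeff (n • m + ρ) φ := rfl

variable [DecidableEq σ]

lemma coeff_nsmul_add_monomial_mul_expand (hn : n ≠ 0) {ρ ρ' : σ →₀ ℕ} (hρ : ∀ i, ρ i < n)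
    (hρ' : ∀ i, ρ' i < n) (m : σ →₀ ℕ) (h : MvPowerSeries σ K) :
    coeff (n • m + ρ') (monomial ρ 1 * expand n hn h) = if ρ' = ρ then coeff m h else 0 := by
  rw [coeff_monomial_mul, one_mul]
  split_ifs with hle hρρ' hρρ'
  · subst hρρ'; simp
  · obtain ⟨i, hi⟩ := DFunLike.ne_iff.mp hρρ'
    refine coeff_expand_of_not_dvd n hn h (i := i) fun hdvd => hi ?_
    have hmod := (Nat.modEq_iff_dvd' (hle i)).mpr (by simpa using hdvd)
    simpa [Nat.ModEq, Nat.mul_add_mod, Nat.mod_eq_of_lt, hρ i, hρ' i] using hmod.symm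
  · subst hρρ'; simp at hle
  · rfl

variable [Fintype σ]

lemma expandComponent_monomial_mul_expand (hn : n ≠ 0) (ρ ρ' : σ → Fin n)
    (h : MvPowerSeries σ K) :
    expandComponent n (residueExponent ρ') (monomial (residueExponent ρ) 1 * expand n hn h) =
      if ρ' = ρ then h else 0 := by
  ext m
  rw [coeff_expandComponent,
    coeff_nsmul_add_monomial_mul_expand hn (residueExponent_lt _) (residueExponent_lt _)]
  simp only [residueExponent_injective.eq_iff]
  split_ifs <;> simp

lemma sum_monomial_mul_expand_expandComponent (hn : n ≠ 0) (φ : MvPowerSeries σ K) :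
    ∑ ρ : σ → Fin n, monomial (residueExponent ρ) 1 * expand n hn
      (expandComponent n (residueExponent ρ) φ) = φ := by
  ext e
  rw [map_sum, ← nsmul_floorDiv_add_residueExponent hn e]
  simp only [coeff_nsmul_add_monomial_mul_expand hn (residueExponent_lt _) (residueExponent_lt _)]
  simp [residueExponent_injective.eq_iff]

lemma expandComponent_mul_expand (hn : n ≠ 0) (ρ : σ → Fin n) (φ h : MvPowerSeries σ K) :
    expandComponent n (residueExponent ρ) (φ * expand n hn h) =
      expandComponent n (residueExponent ρ) φ * h := by
  conv_lhs => rw [← sum_monomial_mul_expand_expandComponent hn φ]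
  simp only [Finset.sum_mul, map_sum, mul_assoc, ← map_mul, expandComponent_monomial_mul_expand,
    Finset.sum_ite_eq, Finset.mem_univ, if_true]

variable (σ K) in
def expandDecomposition (hn : n ≠ 0) :
    ((σ → Fin n) → MvPowerSeries σ K) ≃ₗ[K] MvPowerSeries σ K where
  toFun h := ∑ ρ, monomial (residueExponent ρ) 1 * expand n hn (h ρ)
  map_add' h h' := by simp [mul_add, Finset.sum_add_distrib]
  map_smul' c h := by simp [Finset.smul_sum]
  invFun φ ρ := expandComponent n (residueExponent ρ) φ
  left_inv h := by
    funext ρ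
    simp [map_sum, expandComponent_monomial_mul_expand]
  right_inv := sum_monomial_mul_expand_expandComponent hn

lemma mem_map_expand_iff (hn : n ≠ 0) (I : Ideal (MvPowerSeries σ K)) (φ : MvPowerSeries σ K) :
    φ ∈ I.map (expand n hn) ↔ ∀ ρ : σ → Fin n, expandComponent n (residueExponent ρ) φ ∈ I := by
  refine ⟨fun hφ => ?_, fun hφ => ?_⟩
  · induction hφ using Submodule.span_induction with
    | mem x hx =>
      obtain ⟨x, hx, rfl⟩ := hx
      intro ρ
      rw [← one_mul (expand n hn x), expandComponent_mul_expand]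
      exact I.mul_mem_left _ hx
    | zero => simp
    | add x y _ _ hx hy => simpa using fun ρ => I.add_mem (hx ρ) (hy ρ)
    | smul c x _ hx =>
      intro ρ
      rw [smul_eq_mul, ← sum_monomial_mul_expand_expandComponent hn x, Finset.mul_sum]
      simp only [← mul_assoc, map_sum, expandComponent_mul_expand]
      exact I.sum_mem fun ρ' _ => I.mul_mem_left _ (hx ρ')
  · rw [← sum_monomial_mul_expand_expandComponent hn φ]
    exact Ideal.sum_mem _ fun ρ _ => Ideal.mul_mem_left _ _ (Ideal.mem_map_of_mem _ (hφ ρ))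

lemma map_pi_expandDecomposition (hn : n ≠ 0) (I : Ideal (MvPowerSeries σ K)) :
    (Submodule.pi Set.univ fun _ => I.restrictScalars K).map
        (expandDecomposition σ K hn : ((σ → Fin n) → MvPowerSeries σ K) →ₗ[K] _) =
      (I.map (expand n hn)).restrictScalars K := by
  ext φ
  rw [Submodule.map_equiv_eq_comap_symm, Submodule.mem_comap, Submodule.restrictScalars_mem,
    mem_map_expand_iff]
  exact ⟨fun h ρ => h ρ (Set.mem_univ ρ), fun h ρ _ => h ρ⟩

variable (σ K) in
def quotientMapExpandEquiv (hn : n ≠ 0) (I : Ideal (MvPowerSeries σ K)) :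
    (MvPowerSeries σ K ⧸ I.map (expand n hn)) ≃ₗ[K] ((σ → Fin n) → MvPowerSeries σ K ⧸ I) :=
  (Submodule.Quotient.restrictScalarsEquiv K _).symm ≪≫ₗ
    (Submodule.Quotient.equiv _ _ _ (map_pi_expandDecomposition hn I)).symm ≪≫ₗ
    Submodule.quotientPi _ ≪≫ₗ
    LinearEquiv.piCongrRight fun _ => Submodule.Quotient.restrictScalarsEquiv K I

lemma finite_quotient_map_expand (hn : n ≠ 0) (I : Ideal (MvPowerSeries σ K))
    [Module.Finite K (MvPowerSeries σ K ⧸ I)] :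
    Module.Finite K (MvPowerSeries σ K ⧸ I.map (expand n hn)) :=
  Module.Finite.equiv (quotientMapExpandEquiv σ K hn I).symm

lemma finrank_quotient_map_expand [StrongRankCondition K] (hn : n ≠ 0)
    (I : Ideal (MvPowerSeries σ K))
    [Module.Finite K (MvPowerSeries σ K ⧸ I)] [Module.Free K (MvPowerSeries σ K ⧸ I)] :
    Module.finrank K (MvPowerSeries σ K ⧸ I.map (expand n hn)) =
      n ^ Fintype.card σ * Module.finrank K (MvPowerSeries σ K ⧸ I) := by
  rw [(quotientMapExpandEquiv σ K hn I).finrank_eq, Module.finrank_pi_fintype]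
  simp

end MvPowerSeries

open MvPowerSeries

lemma substXY_eq_expand {n : ℕ} (hn : n ≠ 0) (f : MvPowerSeries (Fin 2) ℂ) :
    substXY n f = expand n hn f := by
  ext e
  by_cases hdvd : n ∣ e 0 ∧ n ∣ e 1
  · have he : e = n • (Finsupp.single 0 (e 0 / n) + Finsupp.single 1 (e 1 / n)) := by
      ext i
      fin_cases i <;> simp [Nat.mul_div_cancel' hdvd.1, Nat.mul_div_cancel' hdvd.2]
    rw [coeff_apply, substXY, if_pos hdvd]
    conv_rhs => rw [he, coeff_expand_smul]
  · rw [coeff_apply, substXY, if_neg hdvd]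
    rcases not_and_or.mp hdvd with h | h <;> exact (coeff_expand_of_not_dvd n hn f h).symm

/-- Intersection multiplicity of Kummer transforms at a preimage of a vertex.
Let `f, g ∈ ℂ⟦x,y⟧` with finite intersection number `ν = dim_ℂ ℂ⟦x,y⟧/(f, g)`.
Then for every `n ≥ 1`, `dim_ℂ ℂ⟦x,y⟧/(f(xⁿ,yⁿ), g(xⁿ,yⁿ)) = n²·ν`. -/
theorem kummer_vertex_intersection (f g : MvPowerSeries (Fin 2) ℂ)
    (hfin : Module.Finite ℂ (MvPowerSeries (Fin 2) ℂ ⧸ Ideal.span {f, g}))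
    (ν : ℕ)
    (hν : Module.finrank ℂ (MvPowerSeries (Fin 2) ℂ ⧸ Ideal.span {f, g}) = ν)
    (n : ℕ) (hn : 1 ≤ n) :
    Module.Finite ℂ
      (MvPowerSeries (Fin 2) ℂ ⧸ Ideal.span {substXY n f, substXY n g}) ∧
    Module.finrank ℂ
      (MvPowerSeries (Fin 2) ℂ ⧸ Ideal.span {substXY n f, substXY n g}) = n ^ 2 * ν := by
  have hn0 : n ≠ 0 := Nat.one_le_iff_ne_zero.mp hn
  have hspan :
      Ideal.span {substXY n f, substXY n g} = (Ideal.span {f, g}).map (expand n hn0) := by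
    rw [Ideal.map_span, Set.image_pair, substXY_eq_expand, substXY_eq_expand]
  rw [hspan]
  exact ⟨finite_quotient_map_expand hn0 _,
    by rw [finrank_quotient_map_expand, hν, Fintype.card_fin]⟩
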